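/- arXiv:2311.00557 — 4 statements merged into one kernel-verified Lean document; each statement's English description precedes it below -/
import Mathlib

section
/- Suppose the possibility distribution r(a1,a2,x1,x2) over binary variables satisfies r(a1=1, x2=0) = 0 and all inputs are possible, i.e. r(x1,x2) = 1 for all values x1,x2 ∈ {0,1}. Then any hidden causal order model r(a1,a2,x1,x2,λ) for r(a1,a2,x1,x2) satisfies r(a1=1, λ=0) = 0 (i.e. possibilistically, a1=1 implies λ=1). -/
/-!
Possibilistic setting: the Boolean semiring `𝔹 = {0,1}` is modelled by `Bool`
(`+` is `||`, `·` is `&&`).  A possibility distribution is a `Bool`-valued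
function which takes the value `true` ("1") on at least one tuple.
The Boolean sum over a finite type is `true` iff the function is `true` somewhere.
-/

/-- Boolean (possibilistic) sum over a finite type. -/
def pSum {α : Type} [Fintype α] (f : α → Bool) : Bool :=
  decide (∃ x, f x = true)

/-- `r5 (a1, a2, x1, x2, λ)` is a *hidden causal order model* for the possibility
distribution `r (a1, a2, x1, x2)`:  `r5` is a possibility distribution whose marginal
over `λ` is `r`, satisfying `λ ⫫ (x1,x2)`, `a1 ⫫ x2 | λ = 0` and `a2 ⫫ x1 | λ = 1`. -/
structure IsHCOModel (r : Bool → Bool → Bool → Bool → Bool)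
    (r5 : Bool → Bool → Bool → Bool → Bool → Bool) : Prop where
  /-- `r5` is a possibility distribution (its Boolean sum is `1`). -/
  normalized : ∃ a1 a2 x1 x2 l, r5 a1 a2 x1 x2 l = true
  /-- the marginal of `r5` over `λ` is `r`. -/
  marg : ∀ a1 a2 x1 x2, pSum (fun l => r5 a1 a2 x1 x2 l) = r a1 a2 x1 x2
  /-- `λ ⫫ (x1, x2)` : `r5(λ,x1,x2) = r5(λ) · r5(x1,x2)`. -/
  indep_lam_inputs : ∀ l x1 x2,
    (pSum fun a1 => pSum fun a2 => r5 a1 a2 x1 x2 l)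
      = ((pSum fun a1 => pSum fun a2 => pSum fun x1' => pSum fun x2' => r5 a1 a2 x1' x2' l)
        && (pSum fun a1 => pSum fun a2 => pSum fun l' => r5 a1 a2 x1 x2 l'))
  /-- `a1 ⫫ x2 | λ = 0` : `r5(a1,x2,λ=0) = r5(a1,λ=0) · r5(x2,λ=0)`. -/
  indep_a1_x2 : ∀ a1 x2,
    (pSum fun a2 => pSum fun x1 => r5 a1 a2 x1 x2 false)
      = ((pSum fun a2 => pSum fun x1 => pSum fun x2' => r5 a1 a2 x1 x2' false)
        && (pSum fun a1' => pSum fun a2 => pSum fun x1 => r5 a1' a2 x1 x2 false))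
  /-- `a2 ⫫ x1 | λ = 1` : `r5(a2,x1,λ=1) = r5(a2,λ=1) · r5(x1,λ=1)`. -/
  indep_a2_x1 : ∀ a2 x1,
    (pSum fun a1 => pSum fun x2 => r5 a1 a2 x1 x2 true)
      = ((pSum fun a1 => pSum fun x1' => pSum fun x2 => r5 a1 a2 x1' x2 true)
        && (pSum fun a1' => pSum fun a2' => pSum fun x2 => r5 a1' a2' x1 x2 true))

/-- If the possibility distribution `r(a1,a2,x1,x2)` satisfies
`r(a1=1, x2=0) = 0` and all inputs are possible, then any hidden causal order model
`r5` for `r` satisfies `r5(a1=1, λ=0) = 0`, i.e. possibilistically `a1 = 1 ⟹ λ = 1`. -/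
theorem stmt0 (r : Bool → Bool → Bool → Bool → Bool)
    (r5 : Bool → Bool → Bool → Bool → Bool → Bool)
    -- `r` is a possibility distribution
    (hr : ∃ a1 a2 x1 x2, r a1 a2 x1 x2 = true)
    -- `r(a1=1, x2=0) = 0`
    (h1 : (pSum fun a2 => pSum fun x1 => r true a2 x1 false) = false)
    -- all inputs are possible: `r(x1,x2) = 1` for all `x1, x2`
    (hin : ∀ x1 x2, (pSum fun a1 => pSum fun a2 => r a1 a2 x1 x2) = true)
    (hmodel : IsHCOModel r r5) :
    -- conclusion: `r5(a1=1, λ=0) = 0`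
    (pSum fun a2 => pSum fun x1 => pSum fun x2 => r5 true a2 x1 x2 false) = false := by
  by_contra hcon
  rw [Bool.not_eq_false] at hcon
  -- unfold the conclusion hypothesis to a Prop
  simp only [pSum, decide_eq_true_eq] at hcon
  obtain ⟨a2w, x1w, x2w, hw⟩ := hcon
  -- marginal fact
  have hmarg : ∀ a1 a2 x1 x2 l, r5 a1 a2 x1 x2 l = true → r a1 a2 x1 x2 = true := by
    intro a1 a2 x1 x2 l h
    rw [← hmodel.marg]
    simp only [pSum, decide_eq_true_eq]
    exact ⟨l, h⟩
  -- r(a1=1,x2=0)=0 as a Prop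
  simp only [pSum, decide_eq_true_eq, decide_eq_false_iff_not, not_exists] at h1
  -- r5(1,a2,x1,0,l) = false always
  have hz : ∀ a2 x1 l, r5 true a2 x1 false l = false := by
    intro a2 x1 l
    by_contra h
    rw [Bool.not_eq_false] at h
    exact h1 a2 x1 (hmarg _ _ _ _ _ h)
  -- the witness has x2 = true
  have hx2 : x2w = true := by
    cases x2w with
    | false => rw [hz a2w x1w false] at hw; exact absurd hw (by simp)
    | true => rfl
  subst hx2
  -- apply indep_a1_x2 at a1 = true, x2 = false
  have key := hmodel.indep_a1_x2 true false
  simp only [pSum, decide_eq_true_eq] at key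
  -- LHS is false since r5(1,·,·,0,0)=0
  have hL : decide (∃ a2, ∃ x1, r5 true a2 x1 false false = true) = false := by
    simp only [decide_eq_false_iff_not, not_exists]
    intro a2 x1 h
    rw [hz a2 x1 false] at h; exact absurd h (by simp)
  rw [hL] at key
  -- first factor of RHS is true (witness)
  have hF1 : decide (∃ a2, ∃ x1, ∃ x2', r5 true a2 x1 x2' false = true) = true := by
    simp only [decide_eq_true_eq]
    exact ⟨a2w, x1w, true, hw⟩
  rw [hF1, Bool.true_and] at key
  -- hence r5(a1,a2,x1,0,0) = false for all a1,a2,x1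
  have hz2 : ∀ a1 a2 x1, r5 a1 a2 x1 false false = false := by
    intro a1 a2 x1
    by_contra h
    rw [Bool.not_eq_false] at h
    have : decide (∃ a1', ∃ a2, ∃ x1, r5 a1' a2 x1 false false = true) = true := by
      simp only [decide_eq_true_eq]; exact ⟨a1, a2, x1, h⟩
    rw [this] at key; exact absurd key (by simp)
  -- now use indep_lam_inputs at λ = false, x1 = false, x2 = false
  have key2 := hmodel.indep_lam_inputs false false false
  simp only [pSum, decide_eq_true_eq] at key2
  have hL2 : decide (∃ a1, ∃ a2, r5 a1 a2 false false false = true) = false := by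
    simp only [decide_eq_false_iff_not, not_exists]
    intro a1 a2 h
    rw [hz2 a1 a2 false] at h; exact absurd h (by simp)
  rw [hL2] at key2
  have hF2 : decide (∃ a1, ∃ a2, ∃ x1', ∃ x2', r5 a1 a2 x1' x2' false = true) = true := by
    simp only [decide_eq_true_eq]
    exact ⟨true, a2w, x1w, true, hw⟩
  rw [hF2, Bool.true_and] at key2
  -- the input marginal of r5 at (0,0) is true
  have hin' := hin false false
  simp only [pSum, decide_eq_true_eq] at hin'
  obtain ⟨a1', a2', hr'⟩ := hin'
  have : ∃ l, r5 a1' a2' false false l = true := by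
    have := hmodel.marg a1' a2' false false
    rw [hr'] at this
    simpa only [pSum, decide_eq_true_eq] using this
  obtain ⟨l, hl⟩ := this
  have hF3 : decide (∃ a1, ∃ a2, ∃ l', r5 a1 a2 false false l' = true) = true := by
    simp only [decide_eq_true_eq]; exact ⟨a1', a2', l, hl⟩
  rw [hF3] at key2
  exact absurd key2 (by simp)
end

section
/- Suppose the possibility distribution r(a1,a2,x1,x2) over binary variables satisfies r(a2=1, x1=0) = 0 and r(a1=0, a2=0, x1=1, x2=1) = 0, and all inputs are possible, i.e. r(x1,x2) = 1 for all values x1,x2 ∈ {0,1}. Then any hidden causal order model r(a1,a2,x1,x2,λ) for r(a1,a2,x1,x2) satisfies r(x1=1, x2=1, a1=0, λ=1) = 0 (i.e. possibilistically, x1=x2=1 together with a1=0 implies λ=0). -/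
/-- If the possibility distribution `r(a1,a2,x1,x2)` satisfies
`r(a2=1, x1=0) = 0` and `r(a1=0, a2=0, x1=1, x2=1) = 0` and all inputs are possible,
then any hidden causal order model `r5` for `r` satisfies
`r5(x1=1, x2=1, a1=0, λ=1) = 0`, i.e. possibilistically `x1 = x2 = 1, a1 = 0 ⟹ λ = 0`. -/
theorem stmt1 (r : Bool → Bool → Bool → Bool → Bool)
    (r5 : Bool → Bool → Bool → Bool → Bool → Bool)
    -- `r` is a possibility distribution
    (hr : ∃ a1 a2 x1 x2, r a1 a2 x1 x2 = true)
    -- `r(a2=1, x1=0) = 0`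
    (h2 : (pSum fun a1 => pSum fun x2 => r a1 true false x2) = false)
    -- `r(a1=0, a2=0, x1=1, x2=1) = 0`
    (h3 : r false false true true = false)
    -- all inputs are possible: `r(x1,x2) = 1` for all `x1, x2`
    (hin : ∀ x1 x2, (pSum fun a1 => pSum fun a2 => r a1 a2 x1 x2) = true)
    (hmodel : IsHCOModel r r5) :
    -- conclusion: `r5(x1=1, x2=1, a1=0, λ=1) = 0`
    (pSum fun a2 => r5 false a2 true true true) = false := by
  obtain ⟨-, marg, lam, -, a2x1⟩ := hmodel
  -- convert Boolean sums into propositional form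
  simp only [pSum, decide_eq_true_eq, ← Bool.decide_and, decide_eq_decide] at lam a2x1
  have marg' : ∀ a1 a2 x1 x2, (∃ l, r5 a1 a2 x1 x2 l = true) ↔ r a1 a2 x1 x2 = true := by
    intro a1 a2 x1 x2
    rw [← marg a1 a2 x1 x2]
    simp [pSum]
  simp only [pSum, decide_eq_false_iff_not, not_exists, decide_eq_true_eq,
    Bool.not_eq_true] at h2 hin ⊢
  -- from h2 : r5 vanishes on (a2 = 1, x1 = 0)
  have hr5zero : ∀ a1 x2 l, r5 a1 true false x2 l = false := by
    intro a1 x2 l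
    have hr0 : r a1 true false x2 = false := h2 a1 x2
    by_contra hc
    rw [Bool.not_eq_false] at hc
    simp [(marg' a1 true false x2).mp ⟨l, hc⟩] at hr0
  intro a2
  by_contra hc
  rw [Bool.not_eq_false] at hc
  cases a2 with
  | false =>
    have : r false false true true = true := (marg' false false true true).mp ⟨true, hc⟩
    rw [h3] at this
    exact Bool.false_ne_true this
  | true =>
    -- hc : r5 false true true true true = true
    -- λ = 1 is possible
    have hlam : ∃ a1 a2 x1 x2, r5 a1 a2 x1 x2 true = true :=
      ⟨false, true, true, true, hc⟩
    -- inputs (x1,x2) = (0,0) are possible for r5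
    have hin00 : ∃ a1 a2 l, r5 a1 a2 false false l = true := by
      obtain ⟨a1, a2, h⟩ := hin false false
      exact ⟨a1, a2, (marg' a1 a2 false false).mpr h⟩
    -- independence λ ⫫ (x1,x2) at (λ=1, x1=0, x2=0)
    have h1 : ∃ a1 a2, r5 a1 a2 false false true = true := by
      refine (lam true false false).mpr ?_
      constructor
      · obtain ⟨a1, a2, x1, x2, h⟩ := hlam; exact ⟨a1, a2, x1, x2, h⟩
      · obtain ⟨a1, a2, l, h⟩ := hin00; exact ⟨a1, a2, l, h⟩
    -- independence a2 ⫫ x1 | λ=1 at (a2=1, x1=0)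
    have h4 : ∃ a1 x2, r5 a1 true false x2 true = true := by
      refine (a2x1 true false).mpr ?_
      constructor
      · exact ⟨false, true, true, hc⟩
      · obtain ⟨a1, a2, h⟩ := h1; exact ⟨a1, a2, false, h⟩
    obtain ⟨a1, x2, h⟩ := h4
    rw [hr5zero a1 x2 true] at h
    exact Bool.false_ne_true h
end

section
/- (Lemma 1.) Suppose the possibility distribution r(a1,a2,x1,x2) over binary variables satisfies r(a1=1, x2=0) = 0, r(a2=1, x1=0) = 0, and r(a1=0, a2=0, x1=1, x2=1) = 0, and all inputs are possible, i.e. r(x1,x2) = 1 for all values x1,x2 ∈ {0,1}. Then any hidden causal order model r(a1,a2,x1,x2,λ) for r(a1,a2,x1,x2) satisfies r(x1=1, x2=1, a1 ≠ λ) = 0, i.e. possibilistically, x1=x2=1 implies a1=λ. -/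
lemma pSum_eq_true {α : Type} [Fintype α] {f : α → Bool} :
    pSum f = true ↔ ∃ x, f x = true := by simp [pSum]

lemma pSum_eq_false {α : Type} [Fintype α] {f : α → Bool} :
    pSum f = false ↔ ∀ x, f x = false := by
  simp [pSum]

/-- **Lemma 1.**  If the possibility distribution `r(a1,a2,x1,x2)` satisfies
`r(a1=1, x2=0) = 0`, `r(a2=1, x1=0) = 0` and `r(a1=0, a2=0, x1=1, x2=1) = 0`, and all
inputs are possible, then any hidden causal order model `r5` for `r` satisfies
`r5(x1=1, x2=1, a1 ≠ λ) = 0`, i.e. possibilistically `x1 = x2 = 1 ⟹ a1 = λ`. -/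
theorem stmt2 (r : Bool → Bool → Bool → Bool → Bool)
    (r5 : Bool → Bool → Bool → Bool → Bool → Bool)
    -- `r` is a possibility distribution
    (hr : ∃ a1 a2 x1 x2, r a1 a2 x1 x2 = true)
    -- `r(a1=1, x2=0) = 0`
    (h1 : (pSum fun a2 => pSum fun x1 => r true a2 x1 false) = false)
    -- `r(a2=1, x1=0) = 0`
    (h2 : (pSum fun a1 => pSum fun x2 => r a1 true false x2) = false)
    -- `r(a1=0, a2=0, x1=1, x2=1) = 0`
    (h3 : r false false true true = false)
    -- all inputs are possible: `r(x1,x2) = 1` for all `x1, x2`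
    (hin : ∀ x1 x2, (pSum fun a1 => pSum fun a2 => r a1 a2 x1 x2) = true)
    (hmodel : IsHCOModel r r5) :
    -- conclusion: `r5(x1=1, x2=1, a1 ≠ λ) = 0`
    (pSum fun p : Bool × Bool × Bool =>
        (p.1 != p.2.2) && r5 p.1 p.2.1 true true p.2.2) = false := by
  rw [pSum_eq_false]
  rintro ⟨a1, a2, l⟩
  simp only
  by_contra hcon
  rw [Bool.not_eq_false, Bool.and_eq_true, bne_iff_ne] at hcon
  obtain ⟨hne, h5⟩ := hcon
  -- translate hypotheses
  have hr5r : ∀ b1 b2 y1 y2 m, r5 b1 b2 y1 y2 m = true → r b1 b2 y1 y2 = true := by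
    intro b1 b2 y1 y2 m h
    rw [← hmodel.marg, pSum_eq_true]; exact ⟨m, h⟩
  have h1' : ∀ b2 y1, r true b2 y1 false = false := by
    intro b2 y1
    have := pSum_eq_false.1 h1 b2
    exact pSum_eq_false.1 this y1
  have h2' : ∀ b1 y2, r b1 true false y2 = false := by
    intro b1 y2
    have := pSum_eq_false.1 h2 b1
    exact pSum_eq_false.1 this y2
  -- inputs possible in r5
  have hin5 : ∀ y1 y2, ∃ b1 b2 m, r5 b1 b2 y1 y2 m = true := by
    intro y1 y2
    obtain ⟨b1, hb1⟩ := pSum_eq_true.1 (hin y1 y2)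
    obtain ⟨b2, hb2⟩ := pSum_eq_true.1 hb1
    rw [← hmodel.marg] at hb2
    obtain ⟨m, hm⟩ := pSum_eq_true.1 hb2
    exact ⟨b1, b2, m, hm⟩
  -- λ-marginal is true at l
  have hlam : (pSum fun b1 => pSum fun b2 => pSum fun y1 => pSum fun y2 =>
      r5 b1 b2 y1 y2 l) = true :=
    pSum_eq_true.2 ⟨a1, pSum_eq_true.2 ⟨a2, pSum_eq_true.2 ⟨true,
      pSum_eq_true.2 ⟨true, h5⟩⟩⟩⟩
  -- inputs marginal of r5 is true everywhere
  have hinm : ∀ y1 y2, (pSum fun b1 => pSum fun b2 => pSum fun m =>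
      r5 b1 b2 y1 y2 m) = true := by
    intro y1 y2
    obtain ⟨b1, b2, m, hb⟩ := hin5 y1 y2
    exact pSum_eq_true.2 ⟨b1, pSum_eq_true.2 ⟨b2, pSum_eq_true.2 ⟨m, hb⟩⟩⟩
  -- conditional on λ = l, every input is possible
  have hcond : ∀ y1 y2, ∃ b1 b2, r5 b1 b2 y1 y2 l = true := by
    intro y1 y2
    have h := hmodel.indep_lam_inputs l y1 y2
    rw [hlam, hinm y1 y2] at h
    simp only [Bool.and_true] at h
    obtain ⟨b1, hb1⟩ := pSum_eq_true.1 h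
    obtain ⟨b2, hb2⟩ := pSum_eq_true.1 hb1
    exact ⟨b1, b2, hb2⟩
  -- case split on (a1, l); hne rules out equal cases
  cases a1 <;> cases l
  · exact hne rfl
  · -- a1 = false, l = true
    cases a2 with
    | false => exact absurd (hr5r false false true true true h5) (by rw [h3]; simp)
    | true =>
      -- r5(a2=1, λ=1) = true
      have ha2 : (pSum fun b1 => pSum fun y1 => pSum fun y2 =>
          r5 b1 true y1 y2 true) = true :=
        pSum_eq_true.2 ⟨false, pSum_eq_true.2 ⟨true, pSum_eq_true.2 ⟨true, h5⟩⟩⟩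
      -- r5(x1=0, λ=1) = true
      obtain ⟨b1, b2, hb⟩ := hcond false false
      have hx1 : (pSum fun b1' => pSum fun b2' => pSum fun y2 =>
          r5 b1' b2' false y2 true) = true :=
        pSum_eq_true.2 ⟨b1, pSum_eq_true.2 ⟨b2, pSum_eq_true.2 ⟨false, hb⟩⟩⟩
      have h := hmodel.indep_a2_x1 true false
      rw [ha2, hx1] at h
      simp only [Bool.and_true] at h
      obtain ⟨c1, hc1⟩ := pSum_eq_true.1 h
      obtain ⟨y2, hy2⟩ := pSum_eq_true.1 hc1
      exact absurd (hr5r c1 true false y2 true hy2) (by rw [h2' c1 y2]; simp)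
  · -- a1 = true, l = false
    -- r5(a1=1, λ=0) = true
    have ha1 : (pSum fun b2 => pSum fun y1 => pSum fun y2 =>
        r5 true b2 y1 y2 false) = true :=
      pSum_eq_true.2 ⟨a2, pSum_eq_true.2 ⟨true, pSum_eq_true.2 ⟨true, h5⟩⟩⟩
    -- r5(x2=0, λ=0) = true
    obtain ⟨b1, b2, hb⟩ := hcond false false
    have hx2 : (pSum fun b1' => pSum fun b2' => pSum fun y1 =>
        r5 b1' b2' y1 false false) = true :=
      pSum_eq_true.2 ⟨b1, pSum_eq_true.2 ⟨b2, pSum_eq_true.2 ⟨false, hb⟩⟩⟩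
    have h := hmodel.indep_a1_x2 true false
    rw [ha1, hx2] at h
    simp only [Bool.and_true] at h
    obtain ⟨c2, hc2⟩ := pSum_eq_true.1 h
    obtain ⟨y1, hy1⟩ := pSum_eq_true.1 hc2
    exact absurd (hr5r true c2 y1 false false hy1) (by rw [h1' c2 y1]; simp)
  · exact hne rfl
end

section
/- (Lemma: X-basis simulation by the quantum switch, core computation of Lemma obs-2.) Work in ℂ² with standard basis |0⟩, |1⟩, and set |±⟩ := (|0⟩ ± |1⟩)/√2 and |±i⟩ := (|0⟩ ± i|1⟩)/√2. For a1, a2 ∈ {0,1}, define the operator W(a1,a2) on ℂ² ⊗ ℂ² by W(a1,a2) := |+⟩⟨+| ⊗ (|1⟩⟨a2|·|1⟩⟨a1|) + |−⟩⟨−| ⊗ (|1⟩⟨a1|·|1⟩⟨a2|), where the first tensor factor is the control system and the second is the target system. Let v_0 := |+i⟩ and v_1 := |−i⟩. Then for every ψ ∈ ℂ²: Σ_{a2∈{0,1}} Σ_{a3∈{0,1}} ‖(⟨v_{a3}| ⊗ I₂)·W(a1,a2)·(ψ ⊗ |0⟩)‖² equals |⟨+|ψ⟩|² if a1 = 0 and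 equals |⟨−|ψ⟩|² if a1 = 1. -/
/-!
Statement 14: the core computation behind Lemma 2 (`obs-2`) of the paper.
We work with `ℂ²` as `Fin 2 → ℂ` and `ℂ² ⊗ ℂ²` as `Fin 2 × Fin 2 → ℂ`
(control system first, target system second), with the standard Hermitian
inner product (antilinear in the first argument) and its norm.
-/

/-- The standard Hermitian inner product on `ℂ²`, antilinear in the first argument. -/
noncomputable def inn (u v : Fin 2 → ℂ) : ℂ := ∑ i, (starRingEnd ℂ) (u i) * v i

/-- The squared Hermitian norm `‖w‖²` on `ℂ²`. -/
noncomputable def normSqVec (w : Fin 2 → ℂ) : ℝ := ∑ i, Complex.normSq (w i)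

/-- The rank-one operator `|u⟩⟨v| : w ↦ ⟨v, w⟩ • u`, as a matrix. -/
noncomputable def ketbra (u v : Fin 2 → ℂ) : Matrix (Fin 2) (Fin 2) ℂ :=
  Matrix.vecMulVec u (star v)

/-- The basis vector `|0⟩`. -/
def ket0 : Fin 2 → ℂ := ![1, 0]

/-- The basis vector `|1⟩`. -/
def ket1 : Fin 2 → ℂ := ![0, 1]

/-- The computational basis vector `|a⟩` for `a ∈ {0,1}` (`false ↦ |0⟩`, `true ↦ |1⟩`). -/
def ketB (a : Bool) : Fin 2 → ℂ := if a then ket1 else ket0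

/-- `|+⟩ = (|0⟩ + |1⟩)/√2`. -/
noncomputable def ketPlus : Fin 2 → ℂ := (Real.sqrt 2 : ℂ)⁻¹ • (ket0 + ket1)

/-- `|−⟩ = (|0⟩ − |1⟩)/√2`. -/
noncomputable def ketMinus : Fin 2 → ℂ := (Real.sqrt 2 : ℂ)⁻¹ • (ket0 - ket1)

/-- `v_0 = |+i⟩ = (|0⟩ + i|1⟩)/√2` and `v_1 = |−i⟩ = (|0⟩ − i|1⟩)/√2`
(`false ↦ v_0`, `true ↦ v_1`). -/
noncomputable def ketY (a : Bool) : Fin 2 → ℂ :=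
  (Real.sqrt 2 : ℂ)⁻¹ • (ket0 + (if a then -Complex.I else Complex.I) • ket1)

/-- The tensor product `u ⊗ w ∈ ℂ² ⊗ ℂ²`. -/
def tp (u w : Fin 2 → ℂ) : Fin 2 × Fin 2 → ℂ := fun p => u p.1 * w p.2

/-- The partial bra `⟨v| ⊗ I₂ : ℂ² ⊗ ℂ² → ℂ²`, sending `u ⊗ w ↦ ⟨v, u⟩ • w`. -/
noncomputable def braL (v : Fin 2 → ℂ) (w : Fin 2 × Fin 2 → ℂ) : Fin 2 → ℂ :=
  fun j => ∑ i, (starRingEnd ℂ) (v i) * w (i, j)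

/-- The operator
`W(a1,a2) = |+⟩⟨+| ⊗ (|1⟩⟨a2|·|1⟩⟨a1|) + |−⟩⟨−| ⊗ (|1⟩⟨a1|·|1⟩⟨a2|)`
on `ℂ² ⊗ ℂ²` (control ⊗ target), given as a matrix via the Kronecker product. -/
noncomputable def W (a1 a2 : Bool) : Matrix (Fin 2 × Fin 2) (Fin 2 × Fin 2) ℂ :=
  Matrix.kroneckerMap (· * ·) (ketbra ketPlus ketPlus)
      (ketbra ket1 (ketB a2) * ketbra ket1 (ketB a1))
    + Matrix.kroneckerMap (· * ·) (ketbra ketMinus ketMinus)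
      (ketbra ket1 (ketB a1) * ketbra ket1 (ketB a2))

/-!
On `ψ ⊗ |0⟩` the target factor `|1⟩⟨a2|·|1⟩⟨a1|` acts as `⟨a2|1⟩⟨a1|0⟩ • |1⟩`, so for `a1 = 0` only
the `|+⟩` branch with `a2 = 1` survives and `W(0,a2)(ψ ⊗ |0⟩)` is `⟨+|ψ⟩ |+⟩ ⊗ |1⟩` or `0`
(symmetrically `⟨−|ψ⟩ |−⟩ ⊗ |1⟩` for `a1 = 1`, `a2 = 0`). Since `v_0, v_1` is an orthonormal
basis, summing over `a3` recovers the full squared norm of this product vector, `|⟨±|ψ⟩|²`.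
-/

open Complex Matrix

lemma normSq_inv_sqrt_two : normSq ((Real.sqrt 2 : ℂ)⁻¹) = 2⁻¹ := by
  rw [map_inv₀, normSq_ofReal, Real.mul_self_sqrt zero_le_two]

lemma normSq_add_add_normSq_sub (z w : ℂ) :
    normSq (z + w) + normSq (z - w) = 2 * (normSq z + normSq w) := by
  rw [normSq_add, normSq_sub]; ring

lemma normSqVec_zero : normSqVec 0 = 0 := by
  simp [normSqVec]

lemma normSqVec_smul (c : ℂ) (w : Fin 2 → ℂ) : normSqVec (c • w) = normSq c * normSqVec w := by
  simp only [normSqVec, Pi.smul_apply, smul_eq_mul, map_mul, Finset.mul_sum]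

lemma normSqVec_ket1 : normSqVec ket1 = 1 := by
  simp [normSqVec, ket1]

lemma normSqVec_ketPlus : normSqVec ketPlus = 1 := by
  norm_num [normSqVec, ketPlus, ket0, ket1]

lemma normSqVec_ketMinus : normSqVec ketMinus = 1 := by
  norm_num [normSqVec, ketMinus, ket0, ket1]

lemma inn_ketB_ket0 (a : Bool) : inn (ketB a) ket0 = if a then 0 else 1 := by
  cases a <;> simp [inn, ketB, ket0, ket1]

lemma inn_ketB_ket1 (a : Bool) : inn (ketB a) ket1 = if a then 1 else 0 := by
  cases a <;> simp [inn, ketB, ket0, ket1]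

lemma inn_ketY (a : Bool) (u : Fin 2 → ℂ) :
    inn (ketY a) u = (Real.sqrt 2 : ℂ)⁻¹ * (u 0 + (if a then I else -I) * u 1) := by
  cases a <;> simp [inn, ketY, ket0, ket1] <;> ring

lemma sum_normSq_inn_ketY (u : Fin 2 → ℂ) : ∑ a, normSq (inn (ketY a) u) = normSqVec u := by
  simp only [Fintype.sum_bool, inn_ketY, if_true, Bool.false_eq_true, if_false, neg_mul,
    ← sub_eq_add_neg, map_mul, normSq_inv_sqrt_two, ← mul_add, normSq_add_add_normSq_sub, normSq_I]
  rw [normSqVec, Fin.sum_univ_two]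
  ring

lemma ketbra_mulVec (u v w : Fin 2 → ℂ) : ketbra u v *ᵥ w = inn v w • u := by
  rw [ketbra, vecMulVec_mulVec, op_smul_eq_smul]; rfl

lemma tp_add_left (u u' w : Fin 2 → ℂ) : tp (u + u') w = tp u w + tp u' w := by
  ext p; exact add_mul ..

lemma tp_smul_right (c : ℂ) (u w : Fin 2 → ℂ) : tp u (c • w) = tp (c • u) w := by
  ext p
  simp only [tp, Pi.smul_apply, smul_eq_mul]
  ring

lemma kroneckerMap_mulVec_tp (A B : Matrix (Fin 2) (Fin 2) ℂ) (u w : Fin 2 → ℂ) :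
    kroneckerMap (· * ·) A B *ᵥ tp u w = tp (A *ᵥ u) (B *ᵥ w) := by
  ext ⟨i, j⟩
  simp only [mulVec, dotProduct, tp, kroneckerMap_apply, Fintype.sum_prod_type,
    Finset.sum_mul_sum]
  exact Finset.sum_congr rfl fun _ _ => Finset.sum_congr rfl fun _ _ => mul_mul_mul_comm _ _ _ _

lemma braL_tp (v u w : Fin 2 → ℂ) : braL v (tp u w) = inn v u • w := by
  ext j
  simp only [braL, tp, inn, Pi.smul_apply, smul_eq_mul, Finset.sum_mul, mul_assoc]

lemma sum_normSqVec_braL_ketY_tp (u w : Fin 2 → ℂ) :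
    ∑ a, normSqVec (braL (ketY a) (tp u w)) = normSqVec u * normSqVec w := by
  simp only [braL_tp, normSqVec_smul, ← Finset.sum_mul, sum_normSq_inn_ketY]

lemma W_mulVec_tp_ket0 (a1 a2 : Bool) (ψ : Fin 2 → ℂ) :
    W a1 a2 *ᵥ tp ψ ket0 =
      tp ((inn (ketB a1) ket0 * inn (ketB a2) ket1 * inn ketPlus ψ) • ketPlus
        + (inn (ketB a2) ket0 * inn (ketB a1) ket1 * inn ketMinus ψ) • ketMinus) ket1 := by
  simp only [W, add_mulVec, kroneckerMap_mulVec_tp, ← mulVec_mulVec, ketbra_mulVec, mulVec_smul,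
    smul_smul, tp_smul_right, tp_add_left]

/-- **X-basis simulation by the quantum switch.**  For every `ψ ∈ ℂ²`,
`Σ_{a2,a3} ‖(⟨v_{a3}| ⊗ I₂)·W(a1,a2)·(ψ ⊗ |0⟩)‖²` equals `|⟨+|ψ⟩|²` when `a1 = 0`
and `|⟨−|ψ⟩|²` when `a1 = 1`. -/
theorem stmt14 (ψ : Fin 2 → ℂ) :
    (∑ a2 : Bool, ∑ a3 : Bool,
        normSqVec (braL (ketY a3) ((W false a2).mulVec (tp ψ ket0))))
      = Complex.normSq (inn ketPlus ψ) ∧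
    (∑ a2 : Bool, ∑ a3 : Bool,
        normSqVec (braL (ketY a3) ((W true a2).mulVec (tp ψ ket0))))
      = Complex.normSq (inn ketMinus ψ) := by
  simp only [W_mulVec_tp_ket0, sum_normSqVec_braL_ketY_tp, normSqVec_ket1, mul_one]
  simp only [Fintype.sum_bool, inn_ketB_ket0, inn_ketB_ket1]
  constructor <;> simp [normSqVec_smul, normSqVec_zero, normSqVec_ketPlus, normSqVec_ketMinus]
end
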